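/- If d > 2, one can always find a Z_p-subextension 𝓕_1/F of 𝓕_d/F in which none of the places of F that ramify in 𝓕_d/F splits completely. -/
import Mathlib


/-!
Formalization of a statement from:
"Iwasawa Main Conjecture for the non-noetherian Iwasawa algebra of a Z_p^ℕ-extension
of a global function field" (characteristic ideals of duals of Selmer groups of an
abelian variety A/F along a Z_p^ℕ-extension 𝓕/F).

Objects with no Mathlib counterpart (Selmer groups, flat cohomology, places of a global
function field, ...) are taken as abstract data, with their relevant structural properties
as hypotheses.
-/

noncomputable section

/-- `ℚ/ℤ`, the dualizing object for Pontryagin duality of discrete torsion abelian groups. -/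
abbrev QZ : Type := AddCircle (1 : ℚ)

/-- Pontryagin dual of a discrete abelian group `M` (for discrete torsion groups this is
`Hom(M, ℚ/ℤ)`). -/
abbrev PDual (M : Type*) [AddCommGroup M] : Type _ := M →+ QZ

namespace PDual

variable {R M : Type*} [CommRing R] [AddCommGroup M] [Module R M]

/-- The natural (contragredient) scalar action on the Pontryagin dual: `(r • f) x = f (r • x)`. -/
instance instSMul : SMul R (PDual M) :=
  ⟨fun r f => (f : M →+ QZ).comp (DistribMulAction.toAddMonoidEnd R M r)⟩

@[simp] lemma smul_def (r : R) (f : PDual M) (x : M) : (r • f) x = f (r • x) := rfl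

/-- The natural (contragredient) module structure on the Pontryagin dual of a module over a
commutative ring. -/
instance instModule : Module R (PDual M) where
  smul r f := r • f
  one_smul f := AddMonoidHom.ext fun x => by simp
  mul_smul r s f := AddMonoidHom.ext fun x => by simp [← mul_smul, mul_comm]
  smul_zero r := AddMonoidHom.ext fun x => rfl
  smul_add r f g := AddMonoidHom.ext fun x => rfl
  add_smul r s f := AddMonoidHom.ext fun x => by simp [add_smul]
  zero_smul f := AddMonoidHom.ext fun x => by simp

end PDual

/-- The height of an ideal: the infimum of the heights of the prime ideals containing it. -/
noncomputable def idealHeight {R : Type*} [CommRing R] (I : Ideal R) : ℕ∞ :=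
  ⨅ (P : PrimeSpectrum R) (_ : I ≤ P.asIdeal), Order.height P

/-- A module over a (noetherian Krull) domain is pseudo-null if it is torsion and its
annihilator has height at least `2`. -/
def IsPseudoNull (R : Type*) [CommRing R] (M : Type*) [AddCommGroup M] [Module R M] : Prop :=
  Module.IsTorsion R M ∧ 2 ≤ idealHeight (Module.annihilator R M)

/-- `IsCharIdeal R M I` : `I` is the characteristic ideal of the `R`-module `M`; that is,
`I = 0` if `M` is not torsion, and if `M` is a finitely generated torsion module then there is
an exact sequence `0 → P → M → ⊕_{i=1}^n R/𝔭ᵢ^{eᵢ} → Q → 0` with `P`, `Q` pseudo-null and the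
`𝔭ᵢ` height-one primes, and `I = ∏ᵢ 𝔭ᵢ^{eᵢ}`.  (In particular `I = (1)` iff `M` is
pseudo-null.) -/
def IsCharIdeal (R : Type*) [CommRing R] (M : Type*) [AddCommGroup M] [Module R M]
    (I : Ideal R) : Prop :=
  (¬ Module.IsTorsion R M ∧ I = 0) ∨
  (Module.IsTorsion R M ∧ Module.Finite R M ∧
    ∃ (n : ℕ) (𝔭 : Fin n → Ideal R) (e : Fin n → ℕ)
      (f : M →ₗ[R] ∀ i : Fin n, R ⧸ (𝔭 i ^ e i)),
      (∀ i, (𝔭 i).IsPrime) ∧ (∀ i, idealHeight (𝔭 i) = 1) ∧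
      IsPseudoNull R (LinearMap.ker f) ∧
      IsPseudoNull R ((∀ i : Fin n, R ⧸ (𝔭 i ^ e i)) ⧸ LinearMap.range f) ∧
      I = ∏ i, 𝔭 i ^ e i)

/-- Characteristic ideal over `R` of a module `M` over `S`, where the `R`-module structure on
`M` is obtained by restriction of scalars along the ring homomorphism `f : R →+* S`. -/
def IsCharIdealOver {R S : Type*} [CommRing R] [CommRing S] (f : R →+* S)
    (M : Type*) [AddCommGroup M] [Module S M] (I : Ideal R) : Prop :=
  letI : Module R M := Module.compHom M f
  IsCharIdeal R M I

/-- Pseudo-nullity over `R` of a module over `S`, via restriction of scalars along `f`. -/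
def IsPseudoNullOver {R S : Type*} [CommRing R] [CommRing S] (f : R →+* S)
    (M : Type*) [AddCommGroup M] [Module S M] : Prop :=
  letI : Module R M := Module.compHom M f
  IsPseudoNull R M

/-- Finite generation and torsionness over `R` of a module over `S`, via restriction of
scalars along `f : R →+* S`. -/
def IsFGTorsionOver {R S : Type*} [CommRing R] [CommRing S] (f : R →+* S)
    (M : Type*) [AddCommGroup M] [Module S M] : Prop :=
  letI : Module R M := Module.compHom M f
  Module.Finite R M ∧ Module.IsTorsion R M

/-- Lemma 2.4 = BBL2, Lemma 3.1.  If `d > 2`, one can always find a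
`ℤ_p`-subextension `𝓕_1/F` of `𝓕_d/F` in which none of the ramified places splits completely.
A `ℤ_p`-subextension of the `ℤ_p^d`-extension `𝓕_d/F` corresponds to a continuous surjection
`Gal(𝓕_d/F) ≅ ℤ_p^d → ℤ_p` (a surjective `ℤ_p`-linear map); a place `v` splits completely in
the corresponding `𝓕_1` iff the image of its decomposition group `D v` is trivial. -/
theorem statement2
    (p : ℕ) [Fact p.Prime]
    (d : ℕ) (hd : 2 < d)
    -- the places of F, finitely many of which ramify in 𝓕_d/F
    (Place : Type) (ramified : Set Place) (hramfin : ramified.Finite)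
    -- `D v` is the decomposition group of `v` in Gal(𝓕_d/F) ≅ ℤ_p^d, a closed subgroup,
    -- i.e. a ℤ_p-submodule; ramified places have nontrivial decomposition group
    (D : Place → Submodule ℤ_[p] (Fin d → ℤ_[p]))
    (hD : ∀ v ∈ ramified, D v ≠ ⊥) :
    ∃ φ : (Fin d → ℤ_[p]) →ₗ[ℤ_[p]] ℤ_[p],
      Function.Surjective φ ∧ ∀ v ∈ ramified, Submodule.map φ (D v) ≠ ⊥ := by
  classical
  -- pick a nonzero element of each decomposition group
  have hx : ∀ v ∈ ramified, ∃ x, x ∈ D v ∧ x ≠ 0 := fun v hv =>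
    (Submodule.ne_bot_iff (D v)).mp (hD v hv)
  choose! x hxD hxne using hx
  -- the polynomial with coefficients x v
  set P : Place → Polynomial ℤ_[p] :=
    fun v => ∑ i : Fin d, Polynomial.C (x v i) * Polynomial.X ^ (i : ℕ) with hP
  have hPne : ∀ v ∈ ramified, P v ≠ 0 := by
    intro v hv h0
    apply hxne v hv
    funext i
    have : (P v).coeff (i : ℕ) = x v i := by
      rw [hP]
      simp only [Polynomial.finset_sum_coeff, Polynomial.coeff_C_mul, Polynomial.coeff_X_pow]
      rw [Finset.sum_eq_single i]
      · simp
      · intro j _ hji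
        simp [Fin.val_eq_val, Ne.symm hji]
      · simp
    rw [h0] at this
    simpa using this.symm
  -- finitely many roots total
  have hS : (⋃ v ∈ ramified, {t | (P v).IsRoot t}).Finite :=
    hramfin.biUnion fun v hv => Polynomial.finite_setOf_isRoot (hPne v hv)
  obtain ⟨t, ht⟩ := hS.infinite_compl.nonempty
  refine ⟨∑ i : Fin d, (t ^ (i : ℕ)) • LinearMap.proj i, ?_, ?_⟩
  · intro c
    refine ⟨Pi.single ⟨0, by omega⟩ c, ?_⟩
    simp only [LinearMap.sum_apply, LinearMap.smul_apply, LinearMap.proj_apply, smul_eq_mul]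
    rw [Finset.sum_eq_single (⟨0, by omega⟩ : Fin d)]
    · simp
    · intro j _ hj
      simp [Pi.single_eq_of_ne hj]
    · simp
  · intro v hv
    rw [Submodule.ne_bot_iff]
    refine ⟨_, Submodule.mem_map_of_mem (hxD v hv), ?_⟩
    have : ¬ (P v).IsRoot t := by
      intro h
      exact ht (Set.mem_biUnion hv h)
    intro h0
    apply this
    rw [Polynomial.IsRoot, hP]
    simp only [Polynomial.eval_finset_sum, Polynomial.eval_mul, Polynomial.eval_C,
      Polynomial.eval_pow, Polynomial.eval_X]
    simpa [mul_comm] using h0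

end
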